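/- arXiv:quant-ph/0405166 — 2 statements merged into one kernel-verified Lean document; each statement's English description precedes it below -/
import Mathlib

section
/- Let τ be the tracial state on A(I∪J), let K₁ ∈ A(I)₋ and K₂ ∈ A(J)₋ be odd elements with ‖K₁‖ ≤ 1, ‖K₂‖ ≤ 1, and set K := (1/2)(K₁†K₂ − K₁K₂†). Then K is self-adjoint with ‖K‖ ≤ 1, and for every real λ with |λ| ≤ 1 the element P(λ) := 1 + λK is a positive operator with τ(P(λ)) = 1, so that φ_λ(A) := τ(P(λ)A) defines a state on A(I∪J). -/
open scoped ComplexOrder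

/-- The canonical anticommutation relations for a family of annihilation operators. -/
def IsCAR {A : Type*} [Ring A] [StarRing A] {ι : Type*} [DecidableEq ι] (a : ι → A) : Prop :=
  (∀ i j, star (a i) * a j + a j * star (a i) = if i = j then (1 : A) else 0) ∧
  (∀ i j, star (a i) * star (a j) + star (a j) * star (a i) = 0) ∧
  (∀ i j, a i * a j + a j * a i = 0)

/-- A state: a normalized positive linear functional. -/
def IsState {A : Type*} [Ring A] [StarRing A] [Algebra ℂ A] (φ : A → ℂ) : Prop :=
  (∀ x y, φ (x + y) = φ x + φ y) ∧ (∀ (c : ℂ) (x : A), φ (c • x) = c * φ x) ∧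
  φ 1 = 1 ∧ ∀ x, 0 ≤ φ (star x * x)

set_option linter.unusedSectionVars false
set_option linter.unreachableTactic false
set_option linter.unusedTactic false
set_option maxHeartbeats 1000000

section Aux
variable {A : Type*} [Ring A] [StarRing A] [Algebra ℂ A] [StarModule ℂ A]
variable {ι : Type*} [DecidableEq ι] {a : ι → A}
variable {Θ : A ≃⋆ₐ[ℂ] A}

lemma add_self_inj {x y : A} (h : x + x = y + y) : x = y := by
  have h2 : (2:ℂ) • x = (2:ℂ) • y := by rw [two_smul, two_smul]; exact h
  have := smul_right_injective A (two_ne_zero (α := ℂ)) h2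
  exact this

lemma theta_mem (hΘ : ∀ i, Θ (a i) = - a i) {s : Set ι} {x : A}
    (hx : x ∈ StarAlgebra.adjoin ℂ (a '' s)) : Θ x ∈ StarAlgebra.adjoin ℂ (a '' s) := by
  induction hx using StarAlgebra.adjoin_induction with
  | mem z hz =>
    obtain ⟨i, hi, rfl⟩ := hz
    rw [hΘ]
    exact neg_mem (StarAlgebra.subset_adjoin ℂ _ ⟨i, hi, rfl⟩)
  | algebraMap r =>
    rw [Algebra.algebraMap_eq_smul_one, map_smul, map_one]
    exact SMulMemClass.smul_mem r (one_mem _)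
  | add x y hx hy ihx ihy => rw [map_add]; exact add_mem ihx ihy
  | mul x y hx hy ihx ihy => rw [map_mul]; exact mul_mem ihx ihy
  | star x hx ihx => rw [map_star]; exact star_mem ihx

lemma theta_theta (hΘ : ∀ i, Θ (a i) = - a i) {s : Set ι} {x : A}
    (hx : x ∈ StarAlgebra.adjoin ℂ (a '' s)) : Θ (Θ x) = x := by
  induction hx using StarAlgebra.adjoin_induction with
  | mem z hz => obtain ⟨i, hi, rfl⟩ := hz; rw [hΘ, map_neg, hΘ, neg_neg]
  | algebraMap r => rw [Algebra.algebraMap_eq_smul_one, map_smul, map_one, map_smul, map_one]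
  | add x y hx hy ihx ihy => rw [map_add, map_add, ihx, ihy]
  | mul x y hx hy ihx ihy => rw [map_mul, map_mul, ihx, ihy]
  | star x hx ihx => rw [map_star, map_star, ihx]


lemma gen_comm (hCAR : IsCAR a) (hΘ : ∀ i, Θ (a i) = - a i) {s : Set ι} {i : ι} (hi : i ∉ s)
    {y : A} (hy : y ∈ StarAlgebra.adjoin ℂ (a '' s)) :
    a i * y = Θ y * a i ∧ star (a i) * y = Θ y * star (a i) ∧
    a i * Θ y = y * a i ∧ star (a i) * Θ y = y * star (a i) := by
  induction hy using StarAlgebra.adjoin_induction with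
  | mem z hz =>
    obtain ⟨j, hj, rfl⟩ := hz
    have hij : i ≠ j := fun h => hi (h ▸ hj)
    have h1 : a i * a j = - a j * a i := by
      have := hCAR.2.2 i j; rw [neg_mul]; linear_combination (norm := noncomm_ring) this
    have h2 : star (a i) * a j = - a j * star (a i) := by
      have := hCAR.1 i j; rw [if_neg hij] at this
      rw [neg_mul]; linear_combination (norm := noncomm_ring) this
    refine ⟨by rw [hΘ, h1], by rw [hΘ, h2], ?_, ?_⟩
    · rw [hΘ, mul_neg, h1, neg_mul, neg_neg]
    · rw [hΘ, mul_neg, h2, neg_mul, neg_neg]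
  | algebraMap r =>
    have hc : ∀ z : A, z * algebraMap ℂ A r = algebraMap ℂ A r * z := fun z =>
      (Algebra.commutes r z).symm
    have hΘr : Θ (algebraMap ℂ A r) = algebraMap ℂ A r := by
      rw [Algebra.algebraMap_eq_smul_one, map_smul, map_one]
    refine ⟨by rw [hΘr, hc], by rw [hΘr, hc], by rw [hΘr, hc], by rw [hΘr, hc]⟩
  | add x y hx hy ihx ihy =>
    obtain ⟨p1, p2, p3, p4⟩ := ihx; obtain ⟨q1, q2, q3, q4⟩ := ihy
    exact ⟨by simp only [map_add, mul_add, add_mul]; rw [p1, q1],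
      by simp only [map_add, mul_add, add_mul]; rw [p2, q2],
      by simp only [map_add, mul_add, add_mul]; rw [p3, q3],
      by simp only [map_add, mul_add, add_mul]; rw [p4, q4]⟩
  | mul x y hx hy ihx ihy =>
    obtain ⟨p1, p2, p3, p4⟩ := ihx; obtain ⟨q1, q2, q3, q4⟩ := ihy
    refine ⟨?_, ?_, ?_, ?_⟩
    · rw [map_mul, ← mul_assoc, p1, mul_assoc, q1, ← mul_assoc]
    · rw [map_mul, ← mul_assoc, p2, mul_assoc, q2, ← mul_assoc]
    · rw [map_mul, ← mul_assoc, p3, mul_assoc, q3, ← mul_assoc]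
    · rw [map_mul, ← mul_assoc, p4, mul_assoc, q4, ← mul_assoc]
  | star x hx ihx =>
    obtain ⟨p1, p2, p3, p4⟩ := ihx
    refine ⟨?_, ?_, ?_, ?_⟩
    · have := congrArg star p4
      simpa only [star_mul, star_star, map_star] using this.symm
    · have := congrArg star p3
      simpa only [star_mul, star_star, map_star] using this.symm
    · have := congrArg star p2
      simpa only [star_mul, star_star, map_star] using this.symm
    · have := congrArg star p1
      simpa only [star_mul, star_star, map_star] using this.symm

lemma parity_comm (hCAR : IsCAR a) (hΘ : ∀ i, Θ (a i) = - a i) {s₁ s₂ : Set ι}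
    (hd : ∀ i ∈ s₁, i ∉ s₂) {x : A} (hx : x ∈ StarAlgebra.adjoin ℂ (a '' s₁)) :
    ∀ y ∈ StarAlgebra.adjoin ℂ (a '' s₂),
      (x + Θ x) * y = y * (x + Θ x) ∧ (x - Θ x) * y = Θ y * (x - Θ x) := by
  induction hx using StarAlgebra.adjoin_induction with
  | mem z hz =>
    obtain ⟨i, hi, rfl⟩ := hz
    intro y hy
    have hq := gen_comm hCAR hΘ (hd i hi) hy
    constructor
    · rw [hΘ, add_neg_cancel, zero_mul, mul_zero]
    · rw [hΘ, sub_neg_eq_add, add_mul, mul_add, hq.1]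
  | algebraMap r =>
    intro y hy
    have hΘr : Θ (algebraMap ℂ A r) = algebraMap ℂ A r := by
      rw [Algebra.algebraMap_eq_smul_one, map_smul, map_one]
    constructor
    · rw [hΘr, add_mul, mul_add, ← Algebra.commutes r y]
    · rw [hΘr, sub_self, zero_mul, mul_zero]
  | add x y hx hy ihx ihy =>
    intro z hz
    obtain ⟨p1, p2⟩ := ihx z hz; obtain ⟨q1, q2⟩ := ihy z hz
    constructor
    · rw [map_add]
      calc (x + y + (Θ x + Θ y)) * z = (x + Θ x) * z + (y + Θ y) * z := by noncomm_ring
        _ = z * (x + Θ x) + z * (y + Θ y) := by rw [p1, q1]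
        _ = z * (x + y + (Θ x + Θ y)) := by noncomm_ring
    · rw [map_add]
      calc (x + y - (Θ x + Θ y)) * z = (x - Θ x) * z + (y - Θ y) * z := by noncomm_ring
        _ = Θ z * (x - Θ x) + Θ z * (y - Θ y) := by rw [p2, q2]
        _ = Θ z * (x + y - (Θ x + Θ y)) := by noncomm_ring
  | mul x y hx hy ihx ihy =>
    intro z hz
    have hΘz : Θ z ∈ StarAlgebra.adjoin ℂ (a '' s₂) := theta_mem hΘ hz
    have e1 := (ihx z hz).1
    have e1' := (ihx (Θ z) hΘz).1
    have o1 := (ihx z hz).2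
    have o1' := (ihx (Θ z) hΘz).2
    have e2 := (ihy z hz).1
    have o2 := (ihy z hz).2
    have htt : Θ (Θ z) = z := theta_theta hΘ hz
    rw [htt] at o1'
    -- key products
    have hEE : ((x + Θ x) * (y + Θ y)) * z = z * ((x + Θ x) * (y + Θ y)) := by
      rw [mul_assoc, e2, ← mul_assoc, e1, mul_assoc]
    have hOO : ((x - Θ x) * (y - Θ y)) * z = z * ((x - Θ x) * (y - Θ y)) := by
      rw [mul_assoc, o2, ← mul_assoc, o1', mul_assoc]
    have hEO : ((x + Θ x) * (y - Θ y)) * z = Θ z * ((x + Θ x) * (y - Θ y)) := by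
      rw [mul_assoc, o2, ← mul_assoc, e1', mul_assoc]
    have hOE : ((x - Θ x) * (y + Θ y)) * z = Θ z * ((x - Θ x) * (y + Θ y)) := by
      rw [mul_assoc, e2, ← mul_assoc, o1, mul_assoc]
    constructor
    · apply add_self_inj
      have expand : (x * y + Θ (x * y)) * z + (x * y + Θ (x * y)) * z
          = ((x + Θ x) * (y + Θ y)) * z + ((x - Θ x) * (y - Θ y)) * z := by
        rw [map_mul]; noncomm_ring
      have expand2 : z * (x * y + Θ (x * y)) + z * (x * y + Θ (x * y))
          = z * ((x + Θ x) * (y + Θ y)) + z * ((x - Θ x) * (y - Θ y)) := by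
        rw [map_mul]; noncomm_ring
      rw [expand, expand2, hEE, hOO]
    · apply add_self_inj
      have expand : (x * y - Θ (x * y)) * z + (x * y - Θ (x * y)) * z
          = ((x + Θ x) * (y - Θ y)) * z + ((x - Θ x) * (y + Θ y)) * z := by
        rw [map_mul]; noncomm_ring
      have expand2 : Θ z * (x * y - Θ (x * y)) + Θ z * (x * y - Θ (x * y))
          = Θ z * ((x + Θ x) * (y - Θ y)) + Θ z * ((x - Θ x) * (y + Θ y)) := by
        rw [map_mul]; noncomm_ring
      rw [expand, expand2, hEO, hOE]
  | star x hx ihx =>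
    have heven : ∀ y ∈ StarAlgebra.adjoin ℂ (a '' s₂),
        (star x + Θ (star x)) * y = y * (star x + Θ (star x)) := by
      intro y hy
      have h := (ihx (star y) (star_mem hy)).1
      have := congrArg star h
      simpa only [star_mul, star_add, star_star, map_star] using this.symm
    have hodd0 : ∀ y ∈ StarAlgebra.adjoin ℂ (a '' s₂),
        y * (star x - Θ (star x)) = (star x - Θ (star x)) * Θ y := by
      intro y hy
      have h := (ihx (star y) (star_mem hy)).2
      have := congrArg star h
      simpa only [star_mul, star_sub, star_star, map_star] using this
    intro y hy
    refine ⟨heven y hy, ?_⟩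
    have := hodd0 (Θ y) (theta_mem hΘ hy)
    rw [theta_theta hΘ hy] at this
    exact this.symm

lemma odd_comm (hCAR : IsCAR a) (hΘ : ∀ i, Θ (a i) = - a i) {s₁ s₂ : Set ι}
    (hd : ∀ i ∈ s₁, i ∉ s₂) {x y : A} (hx : x ∈ StarAlgebra.adjoin ℂ (a '' s₁))
    (hxodd : Θ x = -x) (hy : y ∈ StarAlgebra.adjoin ℂ (a '' s₂)) :
    x * y = Θ y * x := by
  have h := (parity_comm hCAR hΘ hd hx y hy).2
  rw [hxodd, sub_neg_eq_add] at h
  apply add_self_inj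
  calc x * y + x * y = (x + x) * y := by noncomm_ring
    _ = Θ y * (x + x) := h
    _ = Θ y * x + Θ y * x := by noncomm_ring

lemma odd_anticomm (hCAR : IsCAR a) (hΘ : ∀ i, Θ (a i) = - a i) {s₁ s₂ : Set ι}
    (hd : ∀ i ∈ s₁, i ∉ s₂) {x y : A} (hx : x ∈ StarAlgebra.adjoin ℂ (a '' s₁))
    (hxodd : Θ x = -x) (hy : y ∈ StarAlgebra.adjoin ℂ (a '' s₂)) (hyodd : Θ y = -y) :
    x * y = - (y * x) := by
  rw [odd_comm hCAR hΘ hd hx hxodd hy, hyodd, neg_mul]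


lemma fg_of_le {M N : Submodule ℂ A} (h : M ≤ N) (hN : N.FG) : M.FG := by
  haveI : FiniteDimensional ℂ N := (Submodule.fg_iff_finiteDimensional N).mp hN
  exact (Submodule.fg_iff_finiteDimensional M).mpr (Submodule.finiteDimensional_of_le h)

lemma car_fd (hCAR : IsCAR a) (hΘ : ∀ i, Θ (a i) = - a i) (S : Finset ι) :
    (Subalgebra.toSubmodule (StarAlgebra.adjoin ℂ (a '' (S : Set ι))).toSubalgebra).FG := by
  classical
  induction S using Finset.induction_on with
  | empty =>
    apply fg_of_le (N := Submodule.span ℂ {(1 : A)})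
    · intro x hx
      rw [Subalgebra.mem_toSubmodule, StarSubalgebra.mem_toSubalgebra] at hx
      induction hx using StarAlgebra.adjoin_induction with
      | mem z hz => simp at hz
      | algebraMap r =>
        rw [Algebra.algebraMap_eq_smul_one]
        exact Submodule.smul_mem _ _ (Submodule.mem_span_singleton_self 1)
      | add x y hx hy ihx ihy => exact add_mem ihx ihy
      | mul x y hx hy ihx ihy =>
        obtain ⟨c, rfl⟩ := Submodule.mem_span_singleton.mp ihx
        obtain ⟨d, rfl⟩ := Submodule.mem_span_singleton.mp ihy
        rw [smul_mul_assoc, mul_smul_comm, mul_one, smul_smul]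
        exact Submodule.smul_mem _ _ (Submodule.mem_span_singleton_self 1)
      | star x hx ihx =>
        obtain ⟨c, rfl⟩ := Submodule.mem_span_singleton.mp ihx
        rw [star_smul, star_one]
        exact Submodule.smul_mem _ _ (Submodule.mem_span_singleton_self 1)
    · exact Submodule.fg_span (Set.finite_singleton 1)
  | @insert s S' hs ih =>
    set g := a s with hg
    have hss : s ∉ (S' : Set ι) := by exact_mod_cast hs
    set Bset : Set A := {1, g, star g, star g * g} with hBset
    set Bs : Submodule ℂ A := Submodule.span ℂ Bset with hBs
    set N' : Submodule ℂ A :=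
      Subalgebra.toSubmodule (StarAlgebra.adjoin ℂ (a '' (S' : Set ι))).toSubalgebra with hN'
    have memN' : ∀ {n : A}, n ∈ N' ↔ n ∈ StarAlgebra.adjoin ℂ (a '' (S' : Set ι)) := by
      intro n; rw [hN', Subalgebra.mem_toSubmodule, StarSubalgebra.mem_toSubalgebra]
    set p : Submodule ℂ A := Bs * N' with hp
    have hBsFG : Bs.FG := Submodule.fg_span (by
      apply Set.Finite.insert; apply Set.Finite.insert; apply Set.Finite.insert
      exact Set.finite_singleton _)
    have hpFG : p.FG := Submodule.FG.mul hBsFG ih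
    -- basic members
    have h1B : (1 : A) ∈ Bs := Submodule.subset_span (by left; rfl)
    have hgB : g ∈ Bs := Submodule.subset_span (by right; left; rfl)
    have hsgB : star g ∈ Bs := Submodule.subset_span (by right; right; left; rfl)
    have hsggB : star g * g ∈ Bs := Submodule.subset_span (by right; right; right; rfl)
    have h1N : (1 : A) ∈ N' := memN'.mpr (one_mem _)
    -- CAR consequences
    have haa : g * g = 0 := by
      have := hCAR.2.2 s s
      exact add_self_inj (by rw [this, add_zero])
    have hss2 : star g * star g = 0 := by
      have := hCAR.2.1 s s
      exact add_self_inj (by rw [this, add_zero])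
    have hgsg : g * star g = 1 - star g * g := by
      have := hCAR.1 s s
      rw [if_pos rfl] at this
      rw [eq_sub_iff_add_eq, add_comm]
      exact this
    -- Bs is closed under multiplication
    have BsMul : ∀ b₁ ∈ Bs, ∀ b₂ ∈ Bs, b₁ * b₂ ∈ Bs := by
      have key : ∀ u ∈ Bset, ∀ v ∈ Bset, u * v ∈ Bs := by
        intro u hu v hv
        rcases hu with rfl | rfl | rfl | rfl <;> rcases hv with rfl | rfl | rfl | rfl
        · rw [one_mul]; exact h1B
        · rw [one_mul]; exact hgB
        · rw [one_mul]; exact hsgB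
        · rw [one_mul]; exact hsggB
        · rw [mul_one]; exact hgB
        · rw [haa]; exact zero_mem _
        · rw [hgsg]; exact sub_mem h1B hsggB
        · rw [← mul_assoc, hgsg, sub_mul, one_mul, mul_assoc, haa, mul_zero, sub_zero]
          exact hgB
        · rw [mul_one]; exact hsgB
        · exact hsggB
        · rw [hss2]; exact zero_mem _
        · rw [← mul_assoc, hss2, zero_mul]; exact zero_mem _
        · rw [mul_one]; exact hsggB
        · rw [mul_assoc, haa, mul_zero]; exact zero_mem _
        · rw [mul_assoc, hgsg, mul_sub, mul_one, ← mul_assoc, hss2, zero_mul, sub_zero]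
          exact hsgB
        · rw [← mul_assoc, mul_assoc (star g) g (star g), hgsg, mul_sub, mul_one,
            ← mul_assoc (star g) (star g) g, hss2, zero_mul, sub_zero]
          exact hsggB
      intro b₁ hb₁ b₂ hb₂
      have hmm : Bs * Bs ≤ Bs := by
        rw [hBs, Submodule.span_mul_span]
        rw [Submodule.span_le]
        rintro w ⟨u, hu, v, hv, rfl⟩
        exact key u hu v hv
      exact hmm (Submodule.mul_mem_mul hb₁ hb₂)
    -- swap lemma
    have swap : ∀ n ∈ N', ∀ b ∈ Bs, n * b ∈ p := by
      intro n hn b hb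
      have hn' : n ∈ StarAlgebra.adjoin ℂ (a '' (S' : Set ι)) := memN'.mp hn
      have hΘn : Θ n ∈ N' := memN'.mpr (theta_mem hΘ hn')
      have hq := gen_comm hCAR hΘ hss hn'
      induction hb using Submodule.span_induction with
      | mem u hu =>
        rcases hu with rfl | rfl | rfl | rfl
        · rw [mul_one, ← one_mul n]; exact Submodule.mul_mem_mul h1B hn
        · rw [← hq.2.2.1]; exact Submodule.mul_mem_mul hgB hΘn
        · rw [← hq.2.2.2]; exact Submodule.mul_mem_mul hsgB hΘn
        · have h3 := (gen_comm hCAR hΘ hss (theta_mem hΘ hn')).2.2.1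
          rw [theta_theta hΘ hn'] at h3
          have : n * (star g * g) = (star g * g) * n := by
            rw [← mul_assoc, ← hq.2.2.2, mul_assoc, ← h3, mul_assoc]
          rw [this]
          exact Submodule.mul_mem_mul hsggB hn
      | zero => rw [mul_zero]; exact zero_mem _
      | add u v hu hv ihu ihv => rw [mul_add]; exact add_mem ihu ihv
      | smul c u hu ihu => rw [mul_smul_comm]; exact Submodule.smul_mem _ _ ihu
    -- multiplicative closure of p
    have helper : ∀ z ∈ p, ∀ b ∈ Bs, ∀ n ∈ N', b * z * n ∈ p := by
      intro z hz
      refine Submodule.mul_induction_on hz ?_ ?_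
      · intro b' hb' n' hn' b hb n hn
        have : b * (b' * n') * n = (b * b') * (n' * n) := by noncomm_ring
        rw [this]
        exact Submodule.mul_mem_mul (BsMul b hb b' hb')
          (memN'.mpr (mul_mem (memN'.mp hn') (memN'.mp hn)))
      · intro x y ihx ihy b hb n hn
        have : b * (x + y) * n = b * x * n + b * y * n := by noncomm_ring
        rw [this]
        exact add_mem (ihx b hb n hn) (ihy b hb n hn)
    have mul_closed : ∀ x ∈ p, ∀ y ∈ p, x * y ∈ p := by
      intro x hx y hy
      refine Submodule.mul_induction_on hx ?_ ?_
      · intro b hb n hn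
        refine Submodule.mul_induction_on hy ?_ ?_
        · intro b₂ hb₂ n₂ hn₂
          have : b * n * (b₂ * n₂) = b * (n * b₂) * n₂ := by noncomm_ring
          rw [this]
          exact helper _ (swap n hn b₂ hb₂) b hb n₂ hn₂
        · intro u v ihu ihv
          rw [mul_add]
          exact add_mem ihu ihv
      · intro u v ihu ihv
        rw [add_mul]
        exact add_mem ihu ihv
    have star_closed : ∀ x ∈ p, star x ∈ p := by
      intro x hx
      refine Submodule.mul_induction_on hx ?_ ?_
      · intro b hb n hn
        rw [star_mul]
        have hsb : star b ∈ Bs := by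
          induction hb using Submodule.span_induction with
          | mem u hu =>
            rcases hu with rfl | rfl | rfl | rfl
            · rw [star_one]; exact h1B
            · exact hsgB
            · rw [star_star]; exact hgB
            · rw [star_mul, star_star]; exact hsggB
          | zero => rw [star_zero]; exact zero_mem _
          | add u v hu hv ihu ihv => rw [star_add]; exact add_mem ihu ihv
          | smul c u hu ihu => rw [star_smul]; exact Submodule.smul_mem _ _ ihu
        exact swap (star n) (memN'.mpr (star_mem (memN'.mp hn))) (star b) hsb
      · intro u v ihu ihv
        rw [star_add]
        exact add_mem ihu ihv
    -- conclusion
    apply fg_of_le (N := p) _ hpFG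
    intro x hx
    rw [Subalgebra.mem_toSubmodule, StarSubalgebra.mem_toSubalgebra] at hx
    induction hx using StarAlgebra.adjoin_induction with
    | mem z hz =>
      obtain ⟨i, hi, rfl⟩ := hz
      rw [Finset.coe_insert, Set.mem_insert_iff] at hi
      rcases hi with rfl | hi
      · have := Submodule.mul_mem_mul hgB h1N
        rwa [mul_one] at this
      · have hmem : a i ∈ N' := memN'.mpr (StarAlgebra.subset_adjoin ℂ _ ⟨i, hi, rfl⟩)
        have := Submodule.mul_mem_mul h1B hmem
        rwa [one_mul] at this
    | algebraMap r =>
      rw [Algebra.algebraMap_eq_smul_one]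
      refine Submodule.smul_mem _ _ ?_
      have := Submodule.mul_mem_mul h1B h1N
      rwa [one_mul] at this
    | add x y hx hy ihx ihy => exact add_mem ihx ihy
    | mul x y hx hy ihx ihy => exact mul_closed x ihx y ihy
    | star x hx ihx => exact star_closed x ihx


end Aux

/-- for odd `K₁ ∈ A(I)₋`, `K₂ ∈ A(J)₋` with `‖K₁‖ ≤ 1`, `‖K₂‖ ≤ 1`, the element
`K = (1/2)(K₁†K₂ − K₁K₂†)` is self-adjoint with `‖K‖ ≤ 1`, and for real `|λ| ≤ 1` the element
`P(λ) = 1 + λK` is positive with `τ(P(λ)) = 1`, so `φ_λ(A) = τ(P(λ)A)` is a state. -/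
theorem hopping_density_defines_state
    {A : Type*} [NormedRing A] [StarRing A] [CStarRing A] [NormedAlgebra ℂ A]
    [StarModule ℂ A] [PartialOrder A] [StarOrderedRing A]
    {ι : Type*} [DecidableEq ι] (a : ι → A) (hCAR : IsCAR a)
    (Θ : A ≃⋆ₐ[ℂ] A) (hΘ : ∀ i, Θ (a i) = - a i)
    (I J : Finset ι) (hdisj : Disjoint I J)
    (τ : A → ℂ) (hτ : IsState τ)
    (htrace : ∀ x y, τ (x * y) = τ (y * x))
    (hτprod : ∀ x ∈ StarAlgebra.adjoin ℂ (a '' (I : Set ι)),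
      ∀ y ∈ StarAlgebra.adjoin ℂ (a '' (J : Set ι)), τ (x * y) = τ x * τ y)
    (hτeven : ∀ x, τ (Θ x) = τ x)
    (K₁ K₂ : A)
    (hK₁ : K₁ ∈ StarAlgebra.adjoin ℂ (a '' (I : Set ι))) (hK₁odd : Θ K₁ = - K₁)
    (hK₂ : K₂ ∈ StarAlgebra.adjoin ℂ (a '' (J : Set ι))) (hK₂odd : Θ K₂ = - K₂)
    (hK₁n : ‖K₁‖ ≤ 1) (hK₂n : ‖K₂‖ ≤ 1)
    (K : A) (hK : K = ((1 : ℂ)/2) • (star K₁ * K₂ - K₁ * star K₂)) :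
    star K = K ∧ ‖K‖ ≤ 1 ∧
    ∀ lam : ℝ, |lam| ≤ 1 →
      0 ≤ 1 + (lam : ℂ) • K ∧
      τ (1 + (lam : ℂ) • K) = 1 ∧
      IsState (fun x => τ ((1 + (lam : ℂ) • K) * x)) := by
  obtain ⟨τadd, τsmul, τone, τpos⟩ := hτ
  -- dispose of the trivial case
  rcases subsingleton_or_nontrivial A with hA | hA
  · exfalso
    have h12 : (1 : ℂ) = 2 := by
      calc (1:ℂ) = τ 1 := τone.symm
        _ = τ (1 + 1) := by congr 1; exact Subsingleton.elim _ _
        _ = τ 1 + τ 1 := τadd 1 1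
        _ = 2 := by rw [τone]; norm_num
    norm_num at h12
  have hdIJ : ∀ i ∈ (I : Set ι), i ∉ (J : Set ι) := fun i hi hj =>
    (Finset.disjoint_left.mp hdisj) hi hj
  have hdJI : ∀ i ∈ (J : Set ι), i ∉ (I : Set ι) := fun i hi hj =>
    (Finset.disjoint_left.mp hdisj) hj hi
  have hsK₁ : star K₁ ∈ StarAlgebra.adjoin ℂ (a '' (I : Set ι)) := star_mem hK₁
  have hsK₂ : star K₂ ∈ StarAlgebra.adjoin ℂ (a '' (J : Set ι)) := star_mem hK₂
  have hsK₁odd : Θ (star K₁) = - star K₁ := by rw [map_star, hK₁odd, star_neg]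
  have hsK₂odd : Θ (star K₂) = - star K₂ := by rw [map_star, hK₂odd, star_neg]
  have hhalf : star ((1:ℂ)/2) = (1:ℂ)/2 := by
    simp [Complex.star_def, ← Complex.ofReal_ofNat]
  -- self-adjointness
  have hKsa : star K = K := by
    rw [hK, star_smul, hhalf, star_sub, star_mul, star_mul, star_star, star_star]
    have h1 : star K₂ * K₁ = -(K₁ * star K₂) :=
      odd_anticomm hCAR hΘ hdJI hsK₂ hsK₂odd hK₁ hK₁odd
    have h2 : K₂ * star K₁ = -(star K₁ * K₂) :=
      odd_anticomm hCAR hΘ hdJI hK₂ hK₂odd hsK₁ hsK₁odd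
    rw [h1, h2]
    congr 1
    abel
  -- norm bound
  have hKn : ‖K‖ ≤ 1 := by
    rw [hK]
    have h1 : ‖star K₁ * K₂ - K₁ * star K₂‖ ≤ 2 := by
      calc ‖star K₁ * K₂ - K₁ * star K₂‖ ≤ ‖star K₁ * K₂‖ + ‖K₁ * star K₂‖ := norm_sub_le _ _
        _ ≤ ‖star K₁‖ * ‖K₂‖ + ‖K₁‖ * ‖star K₂‖ := add_le_add (norm_mul_le _ _) (norm_mul_le _ _)
        _ ≤ 1 * 1 + 1 * 1 := by
            rw [norm_star, norm_star]
            gcongr <;> first | exact hK₁n | exact hK₂n | positivity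
        _ = 2 := by norm_num
    calc ‖((1:ℂ)/2) • (star K₁ * K₂ - K₁ * star K₂)‖
        = ‖(1:ℂ)/2‖ * ‖star K₁ * K₂ - K₁ * star K₂‖ := norm_smul _ _
      _ ≤ (1/2) * 2 := by
          apply mul_le_mul _ h1 (norm_nonneg _) (by norm_num)
          simp
      _ = 1 := by norm_num
  -- τ vanishes on K
  have τzero : τ 0 = 0 := by
    have := τadd 0 0
    rw [add_zero] at this
    linear_combination -this
  have τneg : ∀ x, τ (-x) = - τ x := by
    intro x
    have := τadd x (-x)
    rw [add_neg_cancel, τzero] at this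
    linear_combination -this
  have τsub : ∀ x y, τ (x - y) = τ x - τ y := by
    intro x y
    rw [sub_eq_add_neg, τadd, τneg]; ring
  have hτK₂ : τ K₂ = 0 := by
    have h := hτeven K₂
    rw [hK₂odd, τneg] at h
    linear_combination (-1/2 : ℂ) * h
  have hτsK₂ : τ (star K₂) = 0 := by
    have h := hτeven (star K₂)
    rw [hsK₂odd, τneg] at h
    linear_combination (-1/2 : ℂ) * h
  have hτK : τ K = 0 := by
    rw [hK, τsmul, τsub, hτprod _ hsK₁ _ hK₂, hτprod _ hK₁ _ hsK₂, hτK₂, hτsK₂]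
    ring
  refine ⟨hKsa, hKn, ?_⟩
  intro lam hlam
  have hτP : τ (1 + (lam : ℂ) • K) = 1 := by
    rw [τadd, τsmul, hτK, τone]; ring
  -- the C*-subalgebra
  set B : StarSubalgebra ℂ A := StarAlgebra.adjoin ℂ (a '' ((I ∪ J : Finset ι) : Set ι)) with hB
  have hsub₁ : (a '' (I : Set ι)) ⊆ a '' ((I ∪ J : Finset ι) : Set ι) := by
    apply Set.image_mono
    rw [Finset.coe_union]
    exact Set.subset_union_left
  have hsub₂ : (a '' (J : Set ι)) ⊆ a '' ((I ∪ J : Finset ι) : Set ι) := by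
    apply Set.image_mono
    rw [Finset.coe_union]
    exact Set.subset_union_right
  have hmono₁ : StarAlgebra.adjoin ℂ (a '' (I : Set ι)) ≤ B :=
    StarAlgebra.adjoin_le (hsub₁.trans (StarAlgebra.subset_adjoin ℂ _))
  have hmono₂ : StarAlgebra.adjoin ℂ (a '' (J : Set ι)) ≤ B :=
    StarAlgebra.adjoin_le (hsub₂.trans (StarAlgebra.subset_adjoin ℂ _))
  have hKB : K ∈ B := by
    rw [hK]
    exact SMulMemClass.smul_mem _ (sub_mem (mul_mem (star_mem (hmono₁ hK₁)) (hmono₂ hK₂))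
      (mul_mem (hmono₁ hK₁) (star_mem (hmono₂ hK₂))))
  haveI hBfd : FiniteDimensional ℂ B :=
    (Submodule.fg_iff_finiteDimensional _).mp (car_fd (Θ := Θ) hCAR hΘ (I ∪ J))
  haveI : CompleteSpace B := FiniteDimensional.complete ℂ B
  haveI : Nontrivial B := ⟨1, 0, fun h => one_ne_zero (congrArg Subtype.val h)⟩
  letI : CStarAlgebra B :=
    { (inferInstance : NormedRing B), (inferInstance : StarRing B),
      (inferInstance : CompleteSpace B), (inferInstance : CStarRing B),
      (inferInstance : NormedAlgebra ℂ B), (inferInstance : StarModule ℂ B) with }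
  set k : B := ⟨K, hKB⟩ with hk
  set b : B := 1 + (lam : ℂ) • k with hbdef
  have hbsa : IsSelfAdjoint b := by
    rw [IsSelfAdjoint, hbdef, star_add, star_one, star_smul]
    congr 1
    · congr 1
      · simp [Complex.star_def, Complex.conj_ofReal]
      · exact Subtype.ext hKsa
  have hknorm : ‖k‖ = ‖K‖ := rfl
  have hmn : ‖(lam : ℂ) • k‖ ≤ 1 := by
    rw [norm_smul, hknorm]
    calc ‖(lam : ℂ)‖ * ‖K‖ ≤ 1 * 1 := by
          apply mul_le_mul _ hKn (norm_nonneg _) (by norm_num)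
          rw [Complex.norm_real, Real.norm_eq_abs]; exact hlam
      _ = 1 := by norm_num
  -- spectrum of b is nonnegative
  have hspec : ∀ x ∈ spectrum ℝ b, 0 ≤ x := by
    intro x hx
    have hb' : b = algebraMap ℝ B 1 + (lam : ℂ) • k := by
      rw [hbdef, map_one]
    rw [hb', ← spectrum.singleton_add_eq] at hx
    obtain ⟨u, hu, z, hz, rfl⟩ := Set.mem_add.mp hx
    rw [Set.mem_singleton_iff] at hu
    subst hu
    have hzb : ‖z‖ ≤ 1 := le_trans (spectrum.norm_le_norm_of_mem hz) hmn
    rw [Real.norm_eq_abs, abs_le] at hzb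
    linarith
  -- square root via continuous functional calculus
  set c : B := cfc Real.sqrt b with hc
  have hcsa : IsSelfAdjoint c := cfc_predicate Real.sqrt b
  have hcc : c * c = b := by
    rw [hc, ← cfc_mul Real.sqrt Real.sqrt b
      Real.continuous_sqrt.continuousOn Real.continuous_sqrt.continuousOn]
    calc cfc (fun x => Real.sqrt x * Real.sqrt x) b
        = cfc (fun x : ℝ => x) b := cfc_congr fun x hx => Real.mul_self_sqrt (hspec x hx)
      _ = b := cfc_id' ℝ b hbsa
  have hPeq : 1 + (lam : ℂ) • K = star ((c : A)) * (c : A) := by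
    have h1 : ((b : A)) = 1 + (lam : ℂ) • K := rfl
    have h2 : ((c * c : B) : A) = (c : A) * (c : A) := rfl
    have h3 : star ((c : A)) = (c : A) := congrArg Subtype.val hcsa
    rw [h3, ← h2, hcc, h1]
  constructor
  · rw [hPeq]
    exact star_mul_self_nonneg _
  refine ⟨hτP, ?_, ?_, ?_, ?_⟩
  · intro x y
    show τ ((1 + (lam : ℂ) • K) * (x + y)) =
      τ ((1 + (lam : ℂ) • K) * x) + τ ((1 + (lam : ℂ) • K) * y)
    rw [mul_add, τadd]
  · intro d x
    show τ ((1 + (lam : ℂ) • K) * (d • x)) = d * τ ((1 + (lam : ℂ) • K) * x)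
    rw [mul_smul_comm, τsmul]
  · show τ ((1 + (lam : ℂ) • K) * 1) = 1
    rw [mul_one, hτP]
  · intro x
    show (0:ℂ) ≤ τ ((1 + (lam : ℂ) • K) * (star x * x))
    set c' : A := (c : A) with hc'
    have e1 : (1 + (lam : ℂ) • K) * (star x * x) = (star c' * c' * star x) * x := by
      rw [hPeq]; noncomm_ring
    have e2 : x * (star c' * c' * star x) = star (c' * star x) * (c' * star x) := by
      rw [star_mul, star_star]; noncomm_ring
    calc (0:ℂ) ≤ τ (star (c' * star x) * (c' * star x)) := τpos _
      _ = τ (x * (star c' * c' * star x)) := by rw [e2]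
      _ = τ ((star c' * c' * star x) * x) := htrace _ _
      _ = τ ((1 + (lam : ℂ) • K) * (star x * x)) := by rw [e1]
end

section
/- For I = {1}, J = {2}, K₁ = a₁, K₂ = a₂, and K = (1/2)(a₁†a₂ − a₁a₂†), the state φ_λ(A) = τ((1+λK)A) satisfies φ_λ(a₁†a₂) = λ/8 and φ_λ(a₁a₂†) = −λ/8; consequently, for every λ ≠ 0 the state φ_λ is non-separable for the CAR pair (A({1}), A({2})). -/
open scoped ComplexOrder

/-- Separability of a state `ω` for a pair of subsets `S`, `T` of the algebra: `ω` agrees on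
products with a convex combination of product states. -/
def IsSeparableState {A : Type*} [Ring A] [StarRing A] [Algebra ℂ A]
    (ω : A → ℂ) (S T : Set A) : Prop :=
  ∃ (n : ℕ) (lam : Fin n → ℝ) (φ : Fin n → (A → ℂ)),
    (∀ i, 0 < lam i) ∧ (∑ i, lam i = 1) ∧
    (∀ i, IsState (φ i)) ∧
    (∀ i, ∀ x ∈ S, ∀ y ∈ T, φ i (x * y) = φ i x * φ i y) ∧
    (∀ x ∈ S, ∀ y ∈ T, ω (x * y) = ∑ i, (lam i : ℂ) * φ i (x * y))

set_option linter.unusedSectionVars false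

section Helpers

variable {A : Type*} [Ring A] [StarRing A] [Algebra ℂ A] [StarModule ℂ A]

lemma isState_neg {φ : A → ℂ} (h : IsState φ) (x : A) : φ (-x) = - φ x := by
  have := h.2.1 (-1) x
  simpa using this

lemma isState_zero {φ : A → ℂ} (h : IsState φ) : φ 0 = 0 := by
  have h0 : φ 0 = φ 0 + φ 0 := by simpa using h.1 0 0
  exact (left_eq_add.mp h0)

lemma isState_sub {φ : A → ℂ} (h : IsState φ) (x y : A) : φ (x - y) = φ x - φ y := by
  rw [sub_eq_add_neg, h.1, isState_neg h, sub_eq_add_neg]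

lemma isState_star {φ : A → ℂ} (h : IsState φ) (x : A) :
    φ (star x) = (starRingEnd ℂ) (φ x) := by
  obtain ⟨hadd, hsmul, hone, hpos⟩ := h
  have hneg := isState_neg ⟨hadd, hsmul, hone, hpos⟩
  have him : ∀ z : A, (φ (star z * z)).im = 0 := by
    intro z
    have h0 := hpos z
    rw [Complex.le_def] at h0
    simpa using h0.2.symm
  have hB : ∀ x y : A, φ (star y * x) = (starRingEnd ℂ) (φ (star x * y)) := by
    intro x y
    have e1 : (φ (star x * y)).im + (φ (star y * x)).im = 0 := by
      have h1 := him (x + y)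
      simp only [star_add, add_mul, mul_add, hadd, Complex.add_im] at h1
      have hx := him x; have hy := him y
      linarith
    have e2 : (φ (star x * y)).re - (φ (star y * x)).re = 0 := by
      have h1 := him (x + Complex.I • y)
      simp only [star_add, star_smul, add_mul, mul_add, smul_mul_assoc, mul_smul_comm,
        smul_smul, hadd, hsmul, hneg, Complex.star_def, Complex.conj_I, Complex.add_im,
        Complex.mul_im, Complex.mul_re, Complex.neg_re, Complex.neg_im, Complex.I_re,
        Complex.I_im, neg_mul, neg_neg, one_mul, zero_mul, mul_one, mul_zero, neg_zero,
        add_zero, zero_add, neg_smul] at h1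
      have hx := him x; have hy := him y
      linarith
    apply Complex.ext
    · simp only [Complex.conj_re]; linarith [e2]
    · simp only [Complex.conj_im]; linarith [e1]
  have h2 := hB x 1
  rw [star_one, one_mul, mul_one] at h2
  have := congrArg (starRingEnd ℂ) h2
  simpa using this.symm

/-- A product state vanishes on the product of two anticommuting self-adjoint elements. -/
lemma product_state_vanishes {φ : A → ℂ} (h : IsState φ) {x y : A}
    (hx : star x = x) (hy : star y = y) (hac : x * y + y * x = 0)
    (hxy : φ (x * y) = φ x * φ y) : φ (x * y) = 0 := by
  have hstar := isState_star h
  have hxr : (starRingEnd ℂ) (φ x) = φ x := by rw [← hstar, hx]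
  have hyr : (starRingEnd ℂ) (φ y) = φ y := by rw [← hstar, hy]
  have hskew : star (x * y) = -(x * y) := by
    rw [star_mul, hx, hy]
    linear_combination (norm := noncomm_ring) hac
  have h1 : - (φ x * φ y) = φ x * φ y := by
    have := hstar (x * y)
    rw [hskew, isState_neg h, hxy, map_mul, hxr, hyr] at this
    exact this
  rw [hxy]
  linear_combination (-1/2 : ℂ) * h1

end Helpers
/-- for the two-site case `I = {1}`, `J = {2}` with `K₁ = a₁`, `K₂ = a₂` and
`K = (1/2)(a₁†a₂ − a₁a₂†)`, the state `φ_λ(A) = τ((1 + λK)A)` satisfies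
`φ_λ(a₁†a₂) = λ/8` and `φ_λ(a₁a₂†) = −λ/8`; hence for `λ ≠ 0` it is non-separable for the
CAR pair `(A({1}), A({2}))`. -/
theorem two_site_hopping_state_nonseparable
    {A : Type*} [Ring A] [StarRing A] [Algebra ℂ A] [StarModule ℂ A]
    {ι : Type*} [DecidableEq ι] (a : ι → A) (hCAR : IsCAR a)
    (Θ : A ≃⋆ₐ[ℂ] A) (hΘ : ∀ i, Θ (a i) = - a i)
    (i₁ i₂ : ι) (hne : i₁ ≠ i₂)
    (τ : A → ℂ) (hτ : IsState τ)
    (htrace : ∀ x y, τ (x * y) = τ (y * x))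
    (hτprod : ∀ x ∈ StarAlgebra.adjoin ℂ (a '' {i₁}),
      ∀ y ∈ StarAlgebra.adjoin ℂ (a '' {i₂}), τ (x * y) = τ x * τ y)
    (hτeven : ∀ x, τ (Θ x) = τ x)
    (K : A) (hK : K = ((1 : ℂ)/2) • (star (a i₁) * a i₂ - a i₁ * star (a i₂)))
    (lam : ℝ) :
    τ ((1 + (lam : ℂ) • K) * (star (a i₁) * a i₂)) = (lam : ℂ) / 8 ∧
    τ ((1 + (lam : ℂ) • K) * (a i₁ * star (a i₂))) = - ((lam : ℂ) / 8) ∧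
    (lam ≠ 0 →
      ¬ IsSeparableState (fun x => τ ((1 + (lam : ℂ) • K) * x))
        (StarAlgebra.adjoin ℂ (a '' {i₁}) : Set A)
        (StarAlgebra.adjoin ℂ (a '' {i₂}) : Set A)) := by
  obtain ⟨hCAR1, hCAR2, hCAR3⟩ := hCAR
  have hadd := hτ.1
  have hsmul := hτ.2.1
  have hone := hτ.2.2.1
  -- basic CAR relations for the two sites
  have h11 : star (a i₁) * a i₁ + a i₁ * star (a i₁) = 1 := by simpa using hCAR1 i₁ i₁
  have h22 : star (a i₂) * a i₂ + a i₂ * star (a i₂) = 1 := by simpa using hCAR1 i₂ i₂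
  have h12 : star (a i₁) * a i₂ + a i₂ * star (a i₁) = 0 := by simpa [hne] using hCAR1 i₁ i₂
  have h21 : star (a i₂) * a i₁ + a i₁ * star (a i₂) = 0 := by
    simpa [hne.symm] using hCAR1 i₂ i₁
  have hcc : star (a i₁) * star (a i₂) + star (a i₂) * star (a i₁) = 0 := hCAR2 i₁ i₂
  have haa : a i₁ * a i₂ + a i₂ * a i₁ = 0 := hCAR3 i₁ i₂
  have hbc : a i₁ * star (a i₂) + star (a i₂) * a i₁ = 0 := by
    rw [add_comm]; exact h21
  -- squares vanish
  have sq0 : ∀ u : A, u * u + u * u = 0 → u * u = 0 := by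
    intro u h
    have h2 : (2:ℂ) • (u*u) = 0 := by rw [two_smul]; exact h
    have h3 := congrArg (fun z => ((2:ℂ))⁻¹ • z) h2
    simpa [smul_smul] using h3
  have hb1sq : a i₁ * a i₁ = 0 := sq0 _ (hCAR3 i₁ i₁)
  have hb2sq : a i₂ * a i₂ = 0 := sq0 _ (hCAR3 i₂ i₂)
  have hc1sq : star (a i₁) * star (a i₁) = 0 := sq0 _ (hCAR2 i₁ i₁)
  have hc2sq : star (a i₂) * star (a i₂) = 0 := sq0 _ (hCAR2 i₂ i₂)
  -- memberships
  have hb1S : a i₁ ∈ StarAlgebra.adjoin ℂ (a '' {i₁}) :=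
    StarAlgebra.subset_adjoin ℂ _ ⟨i₁, rfl, rfl⟩
  have hc1S : star (a i₁) ∈ StarAlgebra.adjoin ℂ (a '' {i₁}) := star_mem hb1S
  have hb2T : a i₂ ∈ StarAlgebra.adjoin ℂ (a '' {i₂}) :=
    StarAlgebra.subset_adjoin ℂ _ ⟨i₂, rfl, rfl⟩
  have hc2T : star (a i₂) ∈ StarAlgebra.adjoin ℂ (a '' {i₂}) := star_mem hb2T
  -- τ vanishes on odd generators
  have hτodd : ∀ i, τ (a i) = 0 := by
    intro i
    have h1 := hτeven (a i)
    rw [hΘ i, isState_neg hτ] at h1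
    linear_combination (-1/2 : ℂ) * h1
  have hτb2 : τ (a i₂) = 0 := hτodd i₂
  have hτb1 : τ (a i₁) = 0 := hτodd i₁
  have hτc2 : τ (star (a i₂)) = 0 := by rw [isState_star hτ, hτb2]; simp
  -- half traces
  have hτb1c1 : τ (a i₁ * star (a i₁)) = 1/2 := by
    have h1 : τ (star (a i₁) * a i₁ + a i₁ * star (a i₁)) = 1 := by rw [h11, hone]
    rw [hadd, htrace (star (a i₁)) (a i₁)] at h1
    linear_combination (1/2 : ℂ) * h1
  have hτc1b1 : τ (star (a i₁) * a i₁) = 1/2 := by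
    rw [htrace]; exact hτb1c1
  have hτb2c2 : τ (a i₂ * star (a i₂)) = 1/2 := by
    have h1 : τ (star (a i₂) * a i₂ + a i₂ * star (a i₂)) = 1 := by rw [h22, hone]
    rw [hadd, htrace (star (a i₂)) (a i₂)] at h1
    linear_combination (1/2 : ℂ) * h1
  have hτc2b2 : τ (star (a i₂) * a i₂) = 1/2 := by
    rw [htrace]; exact hτb2c2
  -- expansion of the state
  have main_expand : ∀ X : A, τ ((1 + (lam:ℂ) • K) * X)
      = τ X + (lam:ℂ) * ((1:ℂ)/2) *
        (τ ((star (a i₁) * a i₂) * X) - τ ((a i₁ * star (a i₂)) * X)) := by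
    intro X
    rw [hK, add_mul, one_mul, smul_mul_assoc, smul_mul_assoc, sub_mul, hadd, hsmul, hsmul,
      isState_sub hτ]
    ring
  -- part 1
  have part1 : τ ((1 + (lam : ℂ) • K) * (star (a i₁) * a i₂)) = (lam : ℂ) / 8 := by
    have hb2c1 : a i₂ * star (a i₁) = -(star (a i₁) * a i₂) :=
      eq_neg_of_add_eq_zero_left (by rw [add_comm]; exact h12)
    have hc2c1 : star (a i₂) * star (a i₁) = -(star (a i₁) * star (a i₂)) :=
      eq_neg_of_add_eq_zero_left (by rw [add_comm]; exact hcc)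
    have e1 : (star (a i₁) * a i₂) * (star (a i₁) * a i₂) = 0 := by
      calc (star (a i₁) * a i₂) * (star (a i₁) * a i₂)
          = star (a i₁) * (a i₂ * star (a i₁)) * a i₂ := by noncomm_ring
        _ = star (a i₁) * (-(star (a i₁) * a i₂)) * a i₂ := by rw [hb2c1]
        _ = -((star (a i₁) * star (a i₁)) * (a i₂ * a i₂)) := by noncomm_ring
        _ = 0 := by rw [hc1sq]; simp
    have e2 : (a i₁ * star (a i₂)) * (star (a i₁) * a i₂)
        = -((a i₁ * star (a i₁)) * (star (a i₂) * a i₂)) := by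
      calc (a i₁ * star (a i₂)) * (star (a i₁) * a i₂)
          = a i₁ * (star (a i₂) * star (a i₁)) * a i₂ := by noncomm_ring
        _ = a i₁ * (-(star (a i₁) * star (a i₂))) * a i₂ := by rw [hc2c1]
        _ = -((a i₁ * star (a i₁)) * (star (a i₂) * a i₂)) := by noncomm_ring
    have t0 : τ (star (a i₁) * a i₂) = 0 := by
      rw [hτprod _ hc1S _ hb2T, hτb2, mul_zero]
    rw [main_expand, t0, e1, isState_zero hτ, e2, isState_neg hτ,
      hτprod _ (mul_mem hb1S hc1S) _ (mul_mem hc2T hb2T), hτb1c1, hτc2b2]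
    ring
  -- part 2
  have part2 : τ ((1 + (lam : ℂ) • K) * (a i₁ * star (a i₂))) = - ((lam : ℂ) / 8) := by
    have hc2b1 : star (a i₂) * a i₁ = -(a i₁ * star (a i₂)) :=
      eq_neg_of_add_eq_zero_left (by rw [add_comm]; exact hbc)
    have hb2b1 : a i₂ * a i₁ = -(a i₁ * a i₂) :=
      eq_neg_of_add_eq_zero_left (by rw [add_comm]; exact haa)
    have e3 : (a i₁ * star (a i₂)) * (a i₁ * star (a i₂)) = 0 := by
      calc (a i₁ * star (a i₂)) * (a i₁ * star (a i₂))
          = a i₁ * (star (a i₂) * a i₁) * star (a i₂) := by noncomm_ring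
        _ = a i₁ * (-(a i₁ * star (a i₂))) * star (a i₂) := by rw [hc2b1]
        _ = -((a i₁ * a i₁) * (star (a i₂) * star (a i₂))) := by noncomm_ring
        _ = 0 := by rw [hb1sq]; simp
    have e4 : (star (a i₁) * a i₂) * (a i₁ * star (a i₂))
        = -((star (a i₁) * a i₁) * (a i₂ * star (a i₂))) := by
      calc (star (a i₁) * a i₂) * (a i₁ * star (a i₂))
          = star (a i₁) * (a i₂ * a i₁) * star (a i₂) := by noncomm_ring
        _ = star (a i₁) * (-(a i₁ * a i₂)) * star (a i₂) := by rw [hb2b1]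
        _ = -((star (a i₁) * a i₁) * (a i₂ * star (a i₂))) := by noncomm_ring
    have t0 : τ (a i₁ * star (a i₂)) = 0 := by
      rw [hτprod _ hb1S _ hc2T, hτb1, zero_mul]
    rw [main_expand, t0, e3, isState_zero hτ, e4, isState_neg hτ,
      hτprod _ (mul_mem hc1S hb1S) _ (mul_mem hb2T hc2T), hτc1b1, hτb2c2]
    ring
  refine ⟨part1, part2, ?_⟩
  intro hlam hsep
  obtain ⟨n, w, φ, hwpos, hwsum, hstate, hprodst, hω⟩ := hsep
  -- each product state vanishes on the hopping term
  have hzero : ∀ i, φ i (star (a i₁) * a i₂) = 0 := by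
    intro i
    have hst := hstate i
    set x₁ : A := a i₁ + star (a i₁) with hx₁def
    set x₂ : A := Complex.I • (star (a i₁) - a i₁) with hx₂def
    set y₁ : A := a i₂ + star (a i₂) with hy₁def
    set y₂ : A := Complex.I • (star (a i₂) - a i₂) with hy₂def
    have hx₁sa : star x₁ = x₁ := by rw [hx₁def]; simp [add_comm]
    have hy₁sa : star y₁ = y₁ := by rw [hy₁def]; simp [add_comm]
    have hx₂sa : star x₂ = x₂ := by
      rw [hx₂def, star_smul, star_sub, star_star, Complex.star_def, Complex.conj_I,
        neg_smul, ← smul_neg, neg_sub]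
    have hy₂sa : star y₂ = y₂ := by
      rw [hy₂def, star_smul, star_sub, star_star, Complex.star_def, Complex.conj_I,
        neg_smul, ← smul_neg, neg_sub]
    have hx₁S : x₁ ∈ StarAlgebra.adjoin ℂ (a '' {i₁}) := add_mem hb1S hc1S
    have hx₂S : x₂ ∈ StarAlgebra.adjoin ℂ (a '' {i₁}) :=
      SMulMemClass.smul_mem _ (sub_mem hc1S hb1S)
    have hy₁T : y₁ ∈ StarAlgebra.adjoin ℂ (a '' {i₂}) := add_mem hb2T hc2T
    have hy₂T : y₂ ∈ StarAlgebra.adjoin ℂ (a '' {i₂}) :=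
      SMulMemClass.smul_mem _ (sub_mem hc2T hb2T)
    -- anticommutation relations
    have AC11 : x₁ * y₁ + y₁ * x₁ = 0 := by
      have hE : x₁ * y₁ + y₁ * x₁
          = (a i₁ * a i₂ + a i₂ * a i₁) + (a i₁ * star (a i₂) + star (a i₂) * a i₁)
            + (star (a i₁) * a i₂ + a i₂ * star (a i₁))
            + (star (a i₁) * star (a i₂) + star (a i₂) * star (a i₁)) := by
        rw [hx₁def, hy₁def]; noncomm_ring
      rw [hE, haa, hbc, h12, hcc]; simp
    have AC12 : x₁ * y₂ + y₂ * x₁ = 0 := by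
      have hE : x₁ * y₂ + y₂ * x₁
          = Complex.I • (((a i₁ * star (a i₂) + star (a i₂) * a i₁)
            + (star (a i₁) * star (a i₂) + star (a i₂) * star (a i₁)))
            - ((a i₁ * a i₂ + a i₂ * a i₁)
            + (star (a i₁) * a i₂ + a i₂ * star (a i₁)))) := by
        rw [hx₁def, hy₂def]
        simp only [smul_mul_assoc, mul_smul_comm, smul_smul, ← smul_add]
        congr 1
        noncomm_ring
      rw [hE, haa, hbc, h12, hcc]; simp
    have AC21 : x₂ * y₁ + y₁ * x₂ = 0 := by
      have hE : x₂ * y₁ + y₁ * x₂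
          = Complex.I • (((star (a i₁) * a i₂ + a i₂ * star (a i₁))
            + (star (a i₁) * star (a i₂) + star (a i₂) * star (a i₁)))
            - ((a i₁ * a i₂ + a i₂ * a i₁)
            + (a i₁ * star (a i₂) + star (a i₂) * a i₁))) := by
        rw [hx₂def, hy₁def]
        simp only [smul_mul_assoc, mul_smul_comm, smul_smul, ← smul_add]
        congr 1
        noncomm_ring
      rw [hE, haa, hbc, h12, hcc]; simp
    have AC22 : x₂ * y₂ + y₂ * x₂ = 0 := by
      have hE : x₂ * y₂ + y₂ * x₂
          = (Complex.I * Complex.I) • (((star (a i₁) * star (a i₂) + star (a i₂) * star (a i₁))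
            + (a i₁ * a i₂ + a i₂ * a i₁))
            - ((star (a i₁) * a i₂ + a i₂ * star (a i₁))
            + (a i₁ * star (a i₂) + star (a i₂) * a i₁))) := by
        rw [hx₂def, hy₂def]
        simp only [smul_mul_assoc, mul_smul_comm, smul_smul, ← smul_add]
        congr 1
        noncomm_ring
      rw [hE, haa, hbc, h12, hcc]; simp
    -- the four products vanish
    have z11 : φ i (x₁ * y₁) = 0 :=
      product_state_vanishes hst hx₁sa hy₁sa AC11 (hprodst i _ hx₁S _ hy₁T)
    have z12 : φ i (x₁ * y₂) = 0 :=
      product_state_vanishes hst hx₁sa hy₂sa AC12 (hprodst i _ hx₁S _ hy₂T)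
    have z21 : φ i (x₂ * y₁) = 0 :=
      product_state_vanishes hst hx₂sa hy₁sa AC21 (hprodst i _ hx₂S _ hy₁T)
    have z22 : φ i (x₂ * y₂) = 0 :=
      product_state_vanishes hst hx₂sa hy₂sa AC22 (hprodst i _ hx₂S _ hy₂T)
    -- decomposition of the hopping term
    have hc1eq : star (a i₁) = ((1:ℂ)/2) • x₁ + (-(Complex.I)/2) • x₂ := by
      rw [hx₁def, hx₂def, smul_smul]
      have hI : (-(Complex.I)/2) * Complex.I = 1/2 := by
        linear_combination (-1/2 : ℂ) * Complex.I_mul_I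
      rw [hI]
      module
    have hb2eq : a i₂ = ((1:ℂ)/2) • y₁ + (Complex.I/2) • y₂ := by
      rw [hy₁def, hy₂def, smul_smul]
      have hI : (Complex.I/2) * Complex.I = -(1/2) := by
        linear_combination (1/2 : ℂ) * Complex.I_mul_I
      rw [hI]
      module
    calc φ i (star (a i₁) * a i₂)
        = φ i ((((1:ℂ)/2) • x₁ + (-(Complex.I)/2) • x₂)
            * (((1:ℂ)/2) • y₁ + (Complex.I/2) • y₂)) := by rw [← hc1eq, ← hb2eq]
      _ = 0 := by
          simp only [add_mul, mul_add, smul_mul_assoc, mul_smul_comm, smul_smul,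
            hst.1, hst.2.1, z11, z12, z21, z22, mul_zero, add_zero]
  -- contradiction
  have hωeq := hω _ hc1S _ hb2T
  simp only [] at hωeq
  rw [part1] at hωeq
  simp only [hzero, mul_zero, Finset.sum_const_zero] at hωeq
  have : (lam : ℂ) = 0 := by
    field_simp at hωeq
    simpa using hωeq
  exact hlam (by exact_mod_cast this)
end
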